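/- Let r, t be odd positive integers with r ≥ (t+1)(t+2). In the graph H obtained from K_{r−1,r} with parts U (|U| = r−1) and V (|V| = r) by adding a perfect matching M on r−t−2 vertices of V and a new vertex u joined to the remaining t+2 vertices of V, there is no subgraph F containing none of the edges at u such that every vertex of U ∪ V has F-degree in {t, r−t}. (Counting edges between U and V modulo r−2t yields 2x − t ≡ 0 (mod r−2t) where x is the number of matching edges of M in F, forcing 2x ≥ r−t, contradicting 2x ≤ r−t−2.) -/

import Mathlib

/-!
Every vertex of `U ∪ V` has `F`-degree `≡ t (mod r - 2t)`. Since `U` is independent and `u` is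
isolated in `F`, the degree sum over `V` exceeds the degree sum over `U` by `2x`, where `x` is the
number of matching edges in `F`; comparing the two sums modulo `r - 2t` gives `2x ≡ t`. As
`0 ≤ 2x ≤ r - t - 2` and `t < r - 2t`, this forces `2x = t`, impossible for odd `t`.
-/

noncomputable def gdeg {W : Type} (G : SimpleGraph W) (v : W) : ℕ :=
  {w | G.Adj v w}.ncard

/-- Adjacency of the graph `H` from the construction: the vertex set is
`U ⊕ V ⊕ {u}` with `|U| = r-1`, `|V| = r`.  All `U`-`V` edges are present
(a copy of `K_{r-1,r}`); the first `r-t-2` vertices of `V` are paired up by a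
perfect matching `M` (vertices `2i` and `2i+1` are matched); the apex `u` is
joined to the remaining `t+2` vertices of `V`. -/
def HAdj (r t : ℕ) :
    (Fin (r - 1) ⊕ Fin r ⊕ Unit) → (Fin (r - 1) ⊕ Fin r ⊕ Unit) → Prop
  | Sum.inl _, Sum.inr (Sum.inl _) => True
  | Sum.inr (Sum.inl _), Sum.inl _ => True
  | Sum.inr (Sum.inl b), Sum.inr (Sum.inl b') =>
      b ≠ b' ∧ (b : ℕ) / 2 = (b' : ℕ) / 2 ∧ (b : ℕ) < r - t - 2 ∧ (b' : ℕ) < r - t - 2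
  | Sum.inr (Sum.inl b), Sum.inr (Sum.inr _) => r - t - 2 ≤ (b : ℕ)
  | Sum.inr (Sum.inr _), Sum.inr (Sum.inl b) => r - t - 2 ≤ (b : ℕ)
  | _, _ => False

def Hgraph (r t : ℕ) : SimpleGraph (Fin (r - 1) ⊕ Fin r ⊕ Unit) where
  Adj := HAdj r t
  symm := by
    exact ⟨by rintro (a | b | u) (a' | b' | u') h <;> simp_all [HAdj] <;> tauto⟩
  loopless := by
    exact ⟨by rintro (a | b | u) h <;> simp_all [HAdj]⟩

open Finset SimpleGraph

lemma gdeg_eq_degree {W : Type} [Fintype W] (G : SimpleGraph W) [DecidableRel G.Adj] (v : W) :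
    gdeg G v = G.degree v := by
  rw [gdeg, ← card_neighborSet_eq_degree, Set.ncard_eq_toFinset_card', Set.toFinset_card]
  rfl

lemma Nat.modEq_sub_two_mul_of_eq_or_eq_sub {n r t : ℕ} (h : 2 * t ≤ r)
    (hn : n = t ∨ n = r - t) : n ≡ t [MOD r - 2 * t] := by
  obtain rfl | rfl := hn
  · rfl
  · rw [show r - t = r - 2 * t + t by omega]
    exact Nat.add_modEq_left

namespace SimpleGraph

variable {α β : Type*} [Fintype α] [Fintype β] (G : SimpleGraph (α ⊕ β)) [DecidableRel G.Adj]

lemma degree_inl_eq (a : α) :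
    G.degree (.inl a) = (G.comap .inl).degree a + #{b | G.Adj (.inl a) (.inr b)} := by
  simp only [← card_neighborFinset_eq_degree, neighborFinset_eq_filter, card_filter,
    Fintype.sum_sum_type, comap_adj]

lemma degree_inr_eq (b : β) :
    G.degree (.inr b) = #{a | G.Adj (.inr b) (.inl a)} + (G.comap .inr).degree b := by
  simp only [← card_neighborFinset_eq_degree, neighborFinset_eq_filter, card_filter,
    Fintype.sum_sum_type, comap_adj]

lemma sum_degree_inl_add_sum_degree_comap_inr :
    ∑ a, G.degree (.inl a) + ∑ b, (G.comap .inr).degree b =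
      ∑ b, G.degree (.inr b) + ∑ a, (G.comap .inl).degree a := by
  have cross : ∑ a, #{b | G.Adj (.inl a) (.inr b)} = ∑ b, #{a | G.Adj (.inr b) (.inl a)} := by
    simp only [card_filter]
    rw [sum_comm]
    simp only [G.adj_comm]
  simp only [degree_inl_eq, degree_inr_eq, sum_add_distrib, cross]
  ring

end SimpleGraph

section Hgraph

variable {r t : ℕ} {F : SimpleGraph (Fin (r - 1) ⊕ Fin r ⊕ Unit)} [DecidableRel F.Adj]

lemma degree_comap_inl_eq_zero_of_le_Hgraph (hFH : F ≤ Hgraph r t) (a : Fin (r - 1)) :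
    (F.comap .inl).degree a = 0 :=
  (degree_eq_zero _ _).mpr fun _ h => hFH h

lemma degree_comap_inr_inl_le_of_le_Hgraph (hFH : F ≤ Hgraph r t)
    (hu : F.IsIsolated (.inr (.inr ()))) (b : Fin r) :
    (F.comap .inr).degree (.inl b) ≤ if (b : ℕ) < r - t - 2 then 1 else 0 := by
  have no_apex : ∀ y, ¬ (F.comap .inr).Adj y (.inr ()) := fun _ h => hu _ h.symm
  split_ifs with hb
  · rw [← card_neighborFinset_eq_degree, card_le_one]
    rintro (c | ⟨⟩) hc (c' | ⟨⟩) hc' <;> rw [mem_neighborFinset] at hc hc'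
    · obtain ⟨hbc, hbc2, -⟩ := hFH hc
      obtain ⟨hbc', hbc2', -⟩ := hFH hc'
      have := Fin.val_ne_of_ne hbc
      have := Fin.val_ne_of_ne hbc'
      exact congrArg Sum.inl (Fin.ext (by omega))
    all_goals first | exact (no_apex _ hc).elim | exact (no_apex _ hc').elim
  · refine ((degree_eq_zero _ _).mpr ?_).le
    rintro (c | ⟨⟩) h
    · exact hb (hFH h).2.2.1
    · exact no_apex _ h

lemma sum_degree_comap_inr_le_of_le_Hgraph (hFH : F ≤ Hgraph r t)
    (hu : F.IsIsolated (.inr (.inr ()))) :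
    ∑ y, (F.comap .inr).degree y ≤ r - t - 2 := by
  have hu' : (F.comap .inr).degree (.inr ()) = 0 :=
    (degree_eq_zero _ _).mpr fun _ h => hu _ h
  calc ∑ y, (F.comap .inr).degree y
      ≤ ∑ b : Fin r, if (b : ℕ) < r - t - 2 then 1 else 0 := by
        simp only [Fintype.sum_sum_type, univ_unique, PUnit.default_eq_unit, sum_singleton, hu',
          add_zero]
        exact sum_le_sum fun b _ => degree_comap_inr_inl_le_of_le_Hgraph hFH hu b
    _ = r - t - 2 := by
        rw [← card_filter, Fin.card_filter_val_lt]
        omega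

lemma sum_degree_inr_inl_eq_of_le_Hgraph (hFH : F ≤ Hgraph r t)
    (hu : F.IsIsolated (.inr (.inr ()))) :
    ∑ b : Fin r, F.degree (.inr (.inl b)) =
      ∑ a, F.degree (.inl a) + ∑ y, (F.comap .inr).degree y := by
  have := F.sum_degree_inl_add_sum_degree_comap_inr
  rw [Fintype.sum_sum_type (fun y => F.degree (.inr y))] at this
  simp only [univ_unique, PUnit.default_eq_unit, (degree_eq_zero _ _).mpr hu,
    degree_comap_inl_eq_zero_of_le_Hgraph hFH, sum_const_zero, add_zero] at this
  exact this.symm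

end Hgraph

theorem no_partial_factor_in_H_general (r t : ℕ) (ht : Odd t)
    (hrt : (t + 1) * (t + 2) ≤ r) :
    ¬ ∃ F : SimpleGraph (Fin (r - 1) ⊕ Fin r ⊕ Unit),
      F ≤ Hgraph r t ∧
      (∀ a : Fin (r - 1),
        gdeg F (Sum.inl a) = t ∨ gdeg F (Sum.inl a) = r - t) ∧
      (∀ b : Fin r,
        gdeg F (Sum.inr (Sum.inl b)) = t ∨ gdeg F (Sum.inr (Sum.inl b)) = r - t) ∧
      gdeg F (Sum.inr (Sum.inr ())) = 0 := by
  classical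
  rintro ⟨F, hFH, hU, hV, hu⟩
  simp only [gdeg_eq_degree] at hU hV hu
  have h3t : 3 * t + 2 ≤ r := by nlinarith
  rw [degree_eq_zero] at hu
  -- `S = 2x`, where `x` is the number of edges of the matching `M` in `F`.
  set S := ∑ y, (F.comap Sum.inr).degree y
  have hS_even : Even S := ⟨_, (sum_degrees_eq_twice_card_edges _).trans (two_mul _)⟩
  have hS_le : S ≤ r - t - 2 := sum_degree_comap_inr_le_of_le_Hgraph hFH hu
  have hS_mod : S ≡ t [MOD r - 2 * t] := by
    have hdeg : ∀ n, n = t ∨ n = r - t → n ≡ t [MOD r - 2 * t] :=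
      fun _ => Nat.modEq_sub_two_mul_of_eq_or_eq_sub (by omega)
    have hUsum : ∑ a, F.degree (.inl a) ≡ (r - 1) * t [MOD r - 2 * t] := by
      simpa using Nat.ModEq.sum (s := univ) fun a _ => hdeg _ (hU a)
    have hVsum : ∑ b, F.degree (.inr (.inl b)) ≡ r * t [MOD r - 2 * t] := by
      simpa using Nat.ModEq.sum (s := univ) fun b _ => hdeg _ (hV b)
    refine Nat.ModEq.add_left_cancel' ((r - 1) * t) ?_
    calc (r - 1) * t + S
        ≡ ∑ a, F.degree (.inl a) + S [MOD r - 2 * t] := hUsum.symm.add_right S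
      _ = ∑ b, F.degree (.inr (.inl b)) := (sum_degree_inr_inl_eq_of_le_Hgraph hFH hu).symm
      _ ≡ r * t [MOD r - 2 * t] := hVsum
      _ = (r - 1) * t + t := by
        rw [← Nat.succ_mul, Nat.succ_eq_add_one, Nat.sub_add_cancel (by omega)]
  have hS : S = t := hS_mod.eq_of_abs_lt (by rw [abs_lt]; omega)
  exact Nat.not_even_iff_odd.mpr ht (hS ▸ hS_even)

/-- In the graph `H` of the construction (for odd `r, t` with
`r ≥ (t+1)(t+2)`), there is no spanning subgraph `F` containing none of the
edges at the apex `u` in which every vertex of `U ∪ V` has degree `t` or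
`r - t`. -/
theorem no_partial_factor_in_H (r t : ℕ) (hr : Odd r) (ht : Odd t)
    (htpos : 0 < t) (hrt : (t + 1) * (t + 2) ≤ r) :
    ¬ ∃ F : SimpleGraph (Fin (r - 1) ⊕ Fin r ⊕ Unit),
      F ≤ Hgraph r t ∧
      (∀ a : Fin (r - 1),
        gdeg F (Sum.inl a) = t ∨ gdeg F (Sum.inl a) = r - t) ∧
      (∀ b : Fin r,
        gdeg F (Sum.inr (Sum.inl b)) = t ∨ gdeg F (Sum.inr (Sum.inl b)) = r - t) ∧
      gdeg F (Sum.inr (Sum.inr ())) = 0 :=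
  no_partial_factor_in_H_general r t ht hrt
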